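/- arXiv:1303.3196 — 6 statements merged into one kernel-verified Lean document; each statement's English description precedes it below -/
import Mathlib

section
/- Let B be a unital C*-algebra, k > 0, and v ∈ B with Im v ≥ k·1. Set ε := k/(2‖v‖). Then for any c ∈ B with ‖c − 1‖ < ε one has Im(vc) ≥ (k/2)·1; in particular vc has strictly positive imaginary part. -/
/-- If `Im v ≥ k·1` with `k > 0` and `‖c − 1‖ < k/(2‖v‖)`, then
`Im (v c) ≥ (k/2)·1`; in particular `v c` has strictly positive imaginary part. -/
theorem im_mul_close_to_one {B : Type*} [NormedRing B] [StarRing B] [CStarRing B]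
    [CompleteSpace B] [NormedAlgebra ℂ B] [StarModule ℂ B]
    [PartialOrder B] [StarOrderedRing B]
    (v c : B) (k : ℝ) (hk : 0 < k)
    (hv : (k : ℂ) • (1 : B) ≤ ((2 * Complex.I)⁻¹ : ℂ) • (v - star v))
    (hc : ‖c - 1‖ < k / (2 * ‖v‖)) :
    ((k / 2 : ℝ) : ℂ) • (1 : B) ≤
      ((2 * Complex.I)⁻¹ : ℂ) • (v * c - star (v * c)) := by
  letI : CStarAlgebra B := ⟨⟩
  -- `‖v‖ > 0`
  have hvnorm : 0 < ‖v‖ := by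
    by_contra h
    push_neg at h
    have h0 : ‖v‖ = 0 := le_antisymm h (norm_nonneg v)
    rw [h0] at hc
    simp at hc
    exact absurd (lt_of_le_of_lt (norm_nonneg _) hc) (lt_irrefl 0)
  set x : B := v * (c - 1) with hx
  set w : B := ((2 * Complex.I)⁻¹ : ℂ) • (x - star x) with hw
  -- `w` is self-adjoint
  have hconj : star ((2 * Complex.I)⁻¹ : ℂ) = -(2 * Complex.I)⁻¹ := by
    simp [Complex.star_def, map_inv₀, map_mul, Complex.conj_I]
  have hwsa : IsSelfAdjoint w := by
    rw [hw, IsSelfAdjoint, star_smul, star_sub, star_star, hconj,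
      neg_smul, smul_sub, smul_sub, neg_sub]
  -- norm bound on `w`
  have hnormI : ‖((2 * Complex.I)⁻¹ : ℂ)‖ = 1 / 2 := by
    simp [norm_inv]
  have hwnorm : ‖w‖ < k / 2 := by
    have h1 : ‖w‖ ≤ (1/2) * ‖x - star x‖ := by
      rw [hw, norm_smul, hnormI]
    have h2 : ‖x - star x‖ ≤ 2 * ‖x‖ := by
      calc ‖x - star x‖ ≤ ‖x‖ + ‖star x‖ := norm_sub_le _ _
        _ = 2 * ‖x‖ := by rw [norm_star]; ring
    have h3 : ‖x‖ ≤ ‖v‖ * ‖c - 1‖ := norm_mul_le _ _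
    have h4 : ‖v‖ * ‖c - 1‖ < k / 2 := by
      have := (mul_lt_mul_of_pos_left hc hvnorm)
      calc ‖v‖ * ‖c - 1‖ < ‖v‖ * (k / (2 * ‖v‖)) := this
        _ = k / 2 := by field_simp
    calc ‖w‖ ≤ (1/2) * ‖x - star x‖ := h1
      _ ≤ (1/2) * (2 * ‖x‖) := by linarith
      _ = ‖x‖ := by ring
      _ ≤ ‖v‖ * ‖c - 1‖ := h3
      _ < k / 2 := h4
  -- `-(‖w‖) • 1 ≤ w`
  have hlow : -(algebraMap ℝ B ‖w‖) ≤ w := hwsa.neg_algebraMap_norm_le_self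
  -- scalar monotonicity: `(-(k/2)) • 1 ≤ -(‖w‖) • 1`
  have hmono : ((-(k/2) : ℝ)) • (1 : B) ≤ (-(‖w‖) : ℝ) • (1 : B) := by
    rw [← sub_nonneg, ← sub_smul]
    set r : ℝ := -‖w‖ - -(k/2) with hr
    have hr0 : 0 ≤ r := by rw [hr]; linarith
    calc (0:B) ≤ star (Real.sqrt r • (1 : B)) * (Real.sqrt r • (1 : B)) :=
          star_mul_self_nonneg _
      _ = r • (1 : B) := by
          rw [star_smul, star_one, star_trivial, smul_mul_smul_comm, one_mul,
            Real.mul_self_sqrt hr0]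
  have hlow2 : ((-(k/2) : ℝ)) • (1 : B) ≤ w := by
    refine le_trans hmono ?_
    rwa [neg_smul, ← Algebra.algebraMap_eq_smul_one]
  -- combine
  have hsum := add_le_add hv hlow2
  have heq : ((2 * Complex.I)⁻¹ : ℂ) • (v - star v) + w
      = ((2 * Complex.I)⁻¹ : ℂ) • (v * c - star (v * c)) := by
    rw [hw, hx, ← smul_add]
    congr 1
    rw [mul_sub, mul_one, star_sub]
    abel
  rw [heq] at hsum
  refine le_trans (le_of_eq ?_) hsum
  rw [show ((k:ℂ)) • (1:B) = (k : ℝ) • (1:B) by rw [← algebraMap_smul ℂ (k:ℝ)]; norm_num,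
    show ((k/2 : ℝ) : ℂ) • (1:B) = ((k/2 : ℝ)) • (1:B) by
      rw [← algebraMap_smul ℂ ((k/2:ℝ))]; norm_num,
    ← add_smul]
  congr 1
  ring
end

section
/- Let M be a unital C*-algebra, x = x* ∈ M, and w ∈ M with ‖w‖‖x‖ < 1. Then 1 − wx is invertible and Im(x(1 − wx)⁻¹) = (x w* − 1)⁻¹ x (Im w) x (wx − 1)⁻¹. -/
/-- For `x = x*` and `‖w‖‖x‖ < 1`, the element `1 − wx` is invertible and
`Im(x(1 − wx)⁻¹) = (x w* − 1)⁻¹ x (Im w) x (wx − 1)⁻¹`. -/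
theorem im_resolvent_formula {M : Type*} [NormedRing M] [StarRing M] [CStarRing M]
    [CompleteSpace M] [NormedAlgebra ℂ M] [StarModule ℂ M]
    (x w : M) (hx : star x = x) (hwx : ‖w‖ * ‖x‖ < 1) :
    IsUnit (1 - w * x) ∧
      ((2 * Complex.I)⁻¹ : ℂ) •
          (x * Ring.inverse (1 - w * x) - star (x * Ring.inverse (1 - w * x))) =
        Ring.inverse (x * star w - 1) * x *
          (((2 * Complex.I)⁻¹ : ℂ) • (w - star w)) * x * Ring.inverse (w * x - 1) := by
  have hu' : ‖w * x‖ < 1 := lt_of_le_of_lt (norm_mul_le _ _) hwx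
  have hv' : ‖x * star w‖ < 1 := by
    calc ‖x * star w‖ ≤ ‖x‖ * ‖star w‖ := norm_mul_le _ _
      _ = ‖w‖ * ‖x‖ := by rw [norm_star]; ring
      _ < 1 := hwx
  set u : Mˣ := Units.oneSub (w * x) hu' with hu
  set v : Mˣ := Units.oneSub (x * star w) hv' with hv
  have huval : (u : M) = 1 - w * x := rfl
  have hvval : (v : M) = 1 - x * star w := rfl
  have hstar : star (u : M) = (v : M) := by
    simp [huval, hvval, star_sub, star_mul, hx]
  have hstarinv : star ((↑u⁻¹ : M)) = (↑v⁻¹ : M) := by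
    symm
    apply Units.inv_eq_of_mul_eq_one_right
    rw [← hstar, ← star_mul, Units.inv_mul, star_one]
  have h1 : Ring.inverse (1 - w * x) = (↑u⁻¹ : M) := by
    rw [← huval, Ring.inverse_unit]
  have h2 : Ring.inverse (w * x - 1) = -(↑u⁻¹ : M) := by
    rw [show w * x - 1 = ((-u : Mˣ) : M) by rw [Units.val_neg, huval, neg_sub],
      Ring.inverse_unit]
    simp
  have h3 : Ring.inverse (x * star w - 1) = -(↑v⁻¹ : M) := by
    rw [show x * star w - 1 = ((-v : Mˣ) : M) by rw [Units.val_neg, hvval, neg_sub],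
      Ring.inverse_unit]
    simp
  have key : x * (↑u⁻¹ : M) - (↑v⁻¹ : M) * x
      = (↑v⁻¹ : M) * (x * (w - star w) * x) * (↑u⁻¹ : M) := by
    have hmid : x * (w - star w) * x = (v : M) * x - x * (u : M) := by
      rw [huval, hvval]; noncomm_ring
    rw [hmid, mul_sub, sub_mul]
    simp [mul_assoc]
  refine ⟨⟨u, rfl⟩, ?_⟩
  rw [h1, h2, h3, star_mul, hstarinv, hx]
  simp only [mul_smul_comm, smul_mul_assoc]
  congr 1
  rw [key]
  noncomm_ring
end

section
/- Let (M, E, B) be a C*-operator-valued probability space (M a unital C*-algebra, B a C*-subalgebra containing the unit, E : M → B a unit-preserving completely positive conditional expectation), and x = x* ∈ M. Then for every b ∈ H⁺(B), the element b − x is invertible, E[(b−x)⁻¹] is invertible in B, and the F-transform F_x(b) := E[(b−x)⁻¹]⁻¹ satisfies Im F_x(b) ≥ Im b. -/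
section Aux
variable {A : Type*} [CStarAlgebra A] [PartialOrder A] [StarOrderedRing A]

lemma my_smul_le_smul (r : ℝ) (hr : 0 ≤ r) {a c : A} (h : a ≤ c) : r • a ≤ r • c := by
  rw [← sub_nonneg, ← smul_sub]
  have h0 : (0 : A) ≤ c - a := sub_nonneg.mpr h
  have key := star_left_conjugate_le_conjugate h0 ((Real.sqrt r : ℝ) • (1 : A))
  simpa [star_smul, mul_smul_comm, smul_mul_assoc, smul_smul,
    Real.mul_self_sqrt hr] using key

lemma my_zero_le_smul_one (r : ℝ) (hr : 0 ≤ r) : (0:A) ≤ r • (1:A) := by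
  have h1 : (0:A) ≤ 1 := by simpa using star_mul_self_nonneg (1:A)
  simpa using my_smul_le_smul r hr h1

lemma my_isUnit_of_re_ge (d : A) (ε : ℝ) (hε : 0 < ε)
    (h : ((2*ε : ℝ)) • (1:A) ≤ d + star d) : IsUnit d := by
  obtain hS | hN := subsingleton_or_nontrivial A
  · exact isUnit_of_subsingleton d
  have hεd : ε ≤ ‖d‖ := by
    have h0 : (0:A) ≤ (2*ε) • (1:A) := my_zero_le_smul_one _ (by positivity)
    have hnorm : ‖(2*ε : ℝ) • (1:A)‖ ≤ ‖d + star d‖ :=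
      CStarAlgebra.norm_le_norm_of_nonneg_of_le h0 h
    have h1 : ‖(2*ε : ℝ) • (1:A)‖ = 2*ε := by
      rw [norm_smul, norm_one, mul_one, Real.norm_eq_abs, abs_of_pos (by positivity)]
    have h2 : ‖d + star d‖ ≤ 2 * ‖d‖ := by
      calc ‖d + star d‖ ≤ ‖d‖ + ‖star d‖ := norm_add_le _ _
        _ = 2*‖d‖ := by rw [norm_star]; ring
    linarith [h1 ▸ hnorm]
  set s : ℝ := ε / (‖d‖^2 + 1) with hs
  have hspos : 0 < s := div_pos hε (by positivity)
  set u := (1:A) - s • d with hu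
  have hexp : star u * u = 1 - s • (d + star d) + (s*s) • (star d * d) := by
    rw [hu, star_sub, star_smul, star_one, star_trivial]
    simp only [sub_mul, mul_sub, one_mul, mul_one, smul_mul_assoc, mul_smul_comm,
      smul_smul, smul_add, smul_sub]
    abel
  set r : ℝ := 1 - 2*s*ε + s*s*‖d‖^2 with hr
  have hle : star u * u ≤ r • 1 := by
    have h1 : -(s • (d + star d)) ≤ -(s • ((2*ε:ℝ) • (1:A))) :=
      neg_le_neg (my_smul_le_smul s hspos.le h)
    have h2 : (s*s) • (star d * d) ≤ (s*s) • ((‖d‖^2 : ℝ) • (1:A)) := by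
      refine my_smul_le_smul _ (by positivity) ?_
      simpa [Algebra.algebraMap_eq_smul_one] using
        CStarAlgebra.star_mul_le_algebraMap_norm_sq (a := d)
    calc star u * u = 1 + (-(s • (d + star d))) + (s*s) • (star d * d) := by
          rw [hexp]; abel
      _ ≤ 1 + (-(s • ((2*ε:ℝ) • (1:A)))) + (s*s) • ((‖d‖^2:ℝ) • (1:A)) := by
          exact add_le_add (add_le_add le_rfl h1) h2
      _ = r • 1 := by
          rw [smul_smul, smul_smul, hr]
          module
  have hdd : ε*ε ≤ ‖d‖^2 := by nlinarith
  have hr0 : 0 ≤ r := by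
    nlinarith [sq_nonneg (1 - s*ε), mul_le_mul_of_nonneg_left hdd (mul_self_nonneg s)]
  have hr1 : r < 1 := by
    have hsd : s * ‖d‖^2 < ε := by
      rw [hs, div_mul_eq_mul_div, div_lt_iff₀ (by positivity)]
      nlinarith [norm_nonneg d]
    nlinarith
  have hnu : ‖u‖ < 1 := by
    have h1 : ‖star u * u‖ ≤ r := by
      rw [← Algebra.algebraMap_eq_smul_one] at hle
      exact (CStarAlgebra.norm_le_iff_le_algebraMap _ hr0 (star_mul_self_nonneg u)).mpr hle
    have h2 : ‖star u * u‖ = ‖u‖ * ‖u‖ := CStarRing.norm_star_mul_self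
    nlinarith [norm_nonneg u]
  have hud : IsUnit (s • d) := by
    have := (Units.oneSub u hnu).isUnit
    simpa [hu] using this
  exact (isUnit_smul_iff (Units.mk0 s hspos.ne') d).mp (by simpa [Units.smul_def] using hud)

lemma my_isUnit_of_im_ge (y w : A) (ε : ℝ) (hε : 0 < ε)
    (hyw : y - star y = (2*Complex.I : ℂ) • w)
    (hw : (ε:ℝ) • (1:A) ≤ w) : IsUnit y := by
  set d := (-Complex.I : ℂ) • y with hd
  have hconj : star (-Complex.I) = Complex.I := by simp
  have hsum : d + star d = (2:ℝ) • w := by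
    have h1 : d + star d = (-Complex.I : ℂ) • (y - star y) := by
      rw [hd, star_smul, hconj, smul_sub]
      module
    rw [h1, hyw, smul_smul]
    have h2 : (-Complex.I) * (2*Complex.I) = ((2:ℝ):ℂ) := by
      simp [Complex.ext_iff]
    rw [h2, Complex.coe_smul]
  have hge : ((2*ε : ℝ)) • (1:A) ≤ d + star d := by
    rw [hsum]
    calc ((2*ε:ℝ)) • (1:A) = (2:ℝ) • (ε:ℝ) • (1:A) := by rw [smul_smul]
      _ ≤ (2:ℝ) • w := my_smul_le_smul 2 (by norm_num) hw
  have hdu : IsUnit d := my_isUnit_of_re_ge d ε hε hge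
  have hy : y = (Complex.I : ℂ) • d := by rw [hd, smul_smul]; simp
  rw [hy]
  exact (isUnit_smul_iff (Units.mk0 (Complex.I) Complex.I_ne_zero) d).mpr hdu

omit [PartialOrder A] [StarOrderedRing A] in
lemma my_inv_sub_star_inv (y : A) (h : IsUnit y) :
    Ring.inverse y - star (Ring.inverse y) =
      -(Ring.inverse y * (y - star y) * star (Ring.inverse y)) := by
  set z := Ring.inverse y with hz
  have hzy : z * y = 1 := Ring.inverse_mul_cancel y h
  have hyz : y * z = 1 := Ring.mul_inverse_cancel y h
  have hsz : star y * star z = 1 := by rw [← star_mul, hzy, star_one]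
  have key : z * (y - star y) * star z = star z - z := by
    rw [mul_sub, sub_mul, hzy, one_mul, mul_assoc, hsz, mul_one]
  rw [key]; abel

end Aux

/-- In a C*-operator-valued probability space `(M, E, B)` and for selfadjoint `x`,
for every `b` in the operator upper half-plane of `B`, `b − x` is invertible,
`E[(b−x)⁻¹]` is invertible, and `Im F_x(b) ≥ Im b` where
`F_x(b) = E[(b−x)⁻¹]⁻¹`. -/
theorem F_transform_increases_im {M : Type*} [NormedRing M] [StarRing M] [CStarRing M]
    [CompleteSpace M] [NormedAlgebra ℂ M] [StarModule ℂ M]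
    [PartialOrder M] [StarOrderedRing M]
    (B : StarSubalgebra ℂ M) (E : M →ₗ[ℂ] M)
    (hE1 : E 1 = 1)
    (hEmem : ∀ m : M, E m ∈ B)
    (hEid : ∀ b ∈ B, E b = b)
    (hEpos : ∀ m : M, 0 ≤ m → 0 ≤ E m)
    (hEstar : ∀ m : M, E (star m) = star (E m))
    (hEbimod : ∀ b₁ ∈ B, ∀ b₂ ∈ B, ∀ m : M, E (b₁ * m * b₂) = b₁ * E m * b₂)
    (x : M) (hx : star x = x)
    (b : M) (hb : b ∈ B)
    (ε : ℝ) (hε : 0 < ε)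
    (him : (ε : ℂ) • (1 : M) ≤ ((2 * Complex.I)⁻¹ : ℂ) • (b - star b)) :
    IsUnit (b - x) ∧
    IsUnit (E (Ring.inverse (b - x))) ∧
    ((2 * Complex.I)⁻¹ : ℂ) • (b - star b) ≤
      ((2 * Complex.I)⁻¹ : ℂ) •
        (Ring.inverse (E (Ring.inverse (b - x))) -
          star (Ring.inverse (E (Ring.inverse (b - x))))) := by
  obtain hS | hN := subsingleton_or_nontrivial M
  · exact ⟨isUnit_of_subsingleton _, isUnit_of_subsingleton _, le_of_eq (Subsingleton.elim _ _)⟩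
  letI : CStarAlgebra M :=
    { ‹NormedRing M›, ‹StarRing M›, ‹CStarRing M›, ‹NormedAlgebra ℂ M›,
      ‹StarModule ℂ M›, ‹CompleteSpace M› with }
  set w : M := ((2 * Complex.I)⁻¹ : ℂ) • (b - star b) with hwdef
  set y : M := b - x with hy
  have h2I : (2*Complex.I : ℂ) ≠ 0 := by simp [Complex.I_ne_zero]
  have hysub : y - star y = b - star b := by
    rw [hy, star_sub, hx]; abel
  have hyw : y - star y = (2*Complex.I : ℂ) • w := by
    rw [hysub, hwdef, smul_smul, mul_inv_cancel₀ h2I, one_smul]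
  have hwr : (ε:ℝ) • (1:M) ≤ w := by
    rw [← Complex.coe_smul]; exact him
  have hwB : w ∈ B := SMulMemClass.smul_mem _ (sub_mem hb (star_mem hb))
  -- Goal 1
  have hyU : IsUnit y := my_isUnit_of_im_ge y w ε hε hyw hwr
  set z : M := Ring.inverse y with hzdef
  have hzy : z * y = 1 := Ring.inverse_mul_cancel y hyU
  have hyz : y * z = 1 := Ring.mul_inverse_cancel y hyU
  have hszsy : star y * star z = 1 := by rw [← star_mul, hzy, star_one]
  set P : M := z * w * star z with hP
  have hzsub : z - star z = -((2*Complex.I : ℂ) • P) := by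
    have h1 := my_inv_sub_star_inv y hyU
    rw [← hzdef, hyw] at h1
    rw [h1, hP, mul_smul_comm, smul_mul_assoc]
  have hzsub' : star z - z = (2*Complex.I : ℂ) • P := by
    rw [← neg_sub z (star z), hzsub, neg_neg]
  set g : M := E z with hg
  have hgB : g ∈ B := hEmem z
  have hgstar : star g = E (star z) := (hEstar z).symm
  have hgsub : star g - g = (2*Complex.I : ℂ) • E P := by
    rw [hgstar, hg, ← map_sub, hzsub', map_smul]
  -- lower bound for E P
  have hny : (0:ℝ) < ‖y‖ := norm_pos_iff.mpr hyU.ne_zero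
  have hzz1 : (1:M) ≤ (‖y‖^2 : ℝ) • (z * star z) := by
    have h1 : y * star y ≤ algebraMap ℝ M (‖y‖^2) :=
      CStarAlgebra.mul_star_le_algebraMap_norm_sq
    have h2 := star_left_conjugate_le_conjugate h1 (star z)
    rw [star_star] at h2
    have e1 : z * (y * star y) * star z = 1 := by
      rw [← mul_assoc z y (star y), mul_assoc (z*y), hzy, one_mul, hszsy]
    have e2 : z * (algebraMap ℝ M (‖y‖^2)) * star z = (‖y‖^2 : ℝ) • (z * star z) := by
      rw [Algebra.algebraMap_eq_smul_one, mul_smul_comm, mul_one, smul_mul_assoc]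
    rwa [e1, e2] at h2
  have hzzinv : ((‖y‖^2)⁻¹ : ℝ) • (1:M) ≤ z * star z := by
    have h1 := my_smul_le_smul ((‖y‖^2)⁻¹) (by positivity) hzz1
    rwa [smul_smul, inv_mul_cancel₀ (by positivity), one_smul] at h1
  have hP1 : (ε:ℝ) • (z * star z) ≤ P := by
    have h2 := star_left_conjugate_le_conjugate hwr (star z)
    rw [star_star] at h2
    have e1 : z * ((ε:ℝ) • (1:M)) * star z = (ε:ℝ) • (z * star z) := by
      rw [mul_smul_comm, mul_one, smul_mul_assoc]
    rwa [e1, ← hP] at h2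
  have hPlow : (ε / ‖y‖^2 : ℝ) • (1:M) ≤ P := by
    calc (ε / ‖y‖^2 : ℝ) • (1:M) = (ε:ℝ) • ((‖y‖^2)⁻¹ : ℝ) • (1:M) := by
          rw [smul_smul, div_eq_mul_inv]
      _ ≤ (ε:ℝ) • (z * star z) := my_smul_le_smul ε hε.le hzzinv
      _ ≤ P := hP1
  have hEone : E ((ε / ‖y‖^2 : ℝ) • (1:M)) = (ε / ‖y‖^2 : ℝ) • (1:M) := by
    rw [← Complex.coe_smul, map_smul, hE1]
  have hEP : (ε / ‖y‖^2 : ℝ) • (1:M) ≤ E P := by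
    have h1 := hEpos _ (sub_nonneg.mpr hPlow)
    rw [map_sub, hEone] at h1
    exact sub_nonneg.mp h1
  -- Goal 2
  have hδ : (0:ℝ) < ε / ‖y‖^2 := by positivity
  have hg2 : star g - star (star g) = (2*Complex.I : ℂ) • E P := by
    rwa [star_star]
  have hgU : IsUnit g := isUnit_star.mp
    (my_isUnit_of_im_ge (star g) (E P) _ hδ hg2 hEP)
  -- Goal 3
  set F : M := Ring.inverse g with hF
  have hFg : F * g = 1 := Ring.inverse_mul_cancel g hgU
  have hsgsF : star g * star F = 1 := by rw [← star_mul, hFg, star_one]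
  have hgsub2 : g - star g = -((2*Complex.I : ℂ) • E P) := by
    rw [← neg_sub (star g) g, hgsub]
  have hFsub : F - star F = (2*Complex.I : ℂ) • (F * E P * star F) := by
    have h1 := my_inv_sub_star_inv g hgU
    rw [← hF, hgsub2] at h1
    rw [h1, mul_neg, neg_mul, neg_neg, mul_smul_comm, smul_mul_assoc]
  -- Schwarz inequality
  have hw0 : (0:M) ≤ w := le_trans (my_zero_le_smul_one ε hε.le) hwr
  have hq : (0:M) ≤ (z - g) * w * star (z - g) := by
    have h1 := star_left_conjugate_le_conjugate hw0 (star (z - g))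
    rw [star_star] at h1
    simpa using h1
  have hgwB : w * star g ∈ B := mul_mem hwB (star_mem hgB)
  have hswB : g * w ∈ B := mul_mem hgB hwB
  have hexp : (z - g) * w * star (z - g) =
      z * w * star z - z * (w * star g) - (g * w) * star z + g * (w * star g) := by
    rw [star_sub]; noncomm_ring
  have e1 : E (z * (w * star g)) = g * (w * star g) := by
    have h1 := hEbimod 1 (one_mem B) (w * star g) hgwB z
    simpa [← hg] using h1
  have e2 : E ((g * w) * star z) = g * (w * star g) := by
    have h1 := hEbimod (g*w) hswB 1 (one_mem B) (star z)
    simp only [mul_one] at h1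
    rw [h1, hEstar, ← hg, mul_assoc]
  have e3 : E (g * (w * star g)) = g * (w * star g) :=
    hEid _ (mul_mem hgB hgwB)
  have hE_exp : E ((z - g) * w * star (z - g)) = E P - g * w * star g := by
    rw [hexp, map_add, map_sub, map_sub, e1, e2, e3, hP]
    rw [mul_assoc g w (star g)]
    abel
  have hSch : g * w * star g ≤ E P := by
    have h1 := hEpos _ hq
    rw [hE_exp] at h1
    exact sub_nonneg.mp h1
  have hfinal : w ≤ F * E P * star F := by
    have h1 := star_left_conjugate_le_conjugate hSch (star F)
    rw [star_star] at h1
    have h2 : F * (g * w * star g) * star F = w := by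
      have h3 : F * (g * w * star g) * star F = (F*g) * w * (star g * star F) := by
        noncomm_ring
      rw [h3, hFg, one_mul, hsgsF, mul_one]
    rwa [h2] at h1
  refine ⟨hyU, hgU, ?_⟩
  rw [hFsub, smul_smul, inv_mul_cancel₀ h2I, one_smul]
  exact hfinal
end

section
/- Let (M, E, B) be a C*-operator-valued probability space, y = y* ∈ M, and ε > 0. Define h_y(w) := E[(w−y)⁻¹]⁻¹ − w for w ∈ H⁺(B). Then for all w ∈ H⁺(B) with Im w ≥ ε·1, one has ‖h_y(w)‖ ≤ 4‖y‖(1 + 2ε⁻¹‖y‖). -/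
/-!
Write `a = w - y`, `r = a⁻¹`, `G = E r`, `c = G⁻¹` and `D = w - E y - c`. Since `ℑ a = ℑ w ≥ ε`,
`ℑ r = -r* (ℑ w) r`, and bimodularity of `E` gives the two identities
`D = E[y (r - G)] c` and `-ℑ D = c* E[(r - G)* (ℑ w) (r - G)] c`.
The Kadison–Schwarz inequality `E[x]* E[x] ≤ E[x* x]` together with `y* y ≤ (‖y‖² / ε) ℑ w`
turns these into `D* D ≤ (‖y‖² / ε) (-ℑ D)`, whence `‖D‖ ≤ ‖y‖² / ε`; and `‖E y‖ ≤ ‖y‖`.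
Invertibility of `a` and of `G` comes from `ℑ x ≥ δ > 0 ⇒ x` invertible (for small `t > 0`,
`1 + i t x` is a strict contraction), applied to `a` and to `-G`, whose imaginary part is
`E[r* (ℑ w) r] ≥ ε E[r* r] ≥ ε / ‖a‖²`.
-/

open Complex ComplexStarModule

section StarAlgebra

variable {A : Type*} [Ring A] [StarRing A] [Algebra ℂ A] [StarModule ℂ A]

lemma coe_imaginaryPart_of_mul_eq_one {a r : A} (h : a * r = 1) :
    (ℑ r : A) = -(star r * ℑ a * r) := by
  have h₁ : star r * a * r = star r := by rw [mul_assoc, h, mul_one]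
  have h₂ : star r * star a * r = r := by rw [← star_mul, h, star_one, one_mul]
  simp only [imaginaryPart_apply_coe, mul_smul_comm, smul_mul_assoc, mul_sub, sub_mul, h₁, h₂,
    ← smul_neg, neg_sub]

lemma coe_imaginaryPart_eq_smul (x : A) : (ℑ x : A) = ((2 * I)⁻¹ : ℂ) • (x - star x) := by
  rw [imaginaryPart_apply_coe, ← Complex.coe_smul, smul_smul, mul_inv, inv_I]
  push_cast
  ring_nf

variable [PartialOrder A]

structure IsConditionalExpectation (B : StarSubalgebra ℂ A) (E : A →ₗ[ℂ] A) : Prop where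
  map_one : E 1 = 1
  mem : ∀ x, E x ∈ B
  map_nonneg : ∀ x, 0 ≤ x → 0 ≤ E x
  map_star : ∀ x, E (star x) = star (E x)
  map_mul_mul : ∀ b₁ ∈ B, ∀ b₂ ∈ B, ∀ x, E (b₁ * x * b₂) = b₁ * E x * b₂

namespace IsConditionalExpectation

variable {B : StarSubalgebra ℂ A} {E : A →ₗ[ℂ] A}

lemma map_mul_left (hE : IsConditionalExpectation B E) {b : A} (hb : b ∈ B) (x : A) :
    E (b * x) = b * E x := by
  simpa using hE.map_mul_mul b hb 1 (one_mem B) x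

lemma map_mul_right (hE : IsConditionalExpectation B E) {b : A} (hb : b ∈ B) (x : A) :
    E (x * b) = E x * b := by
  simpa using hE.map_mul_mul 1 (one_mem B) b hb x

lemma map_of_mem (hE : IsConditionalExpectation B E) {b : A} (hb : b ∈ B) : E b = b := by
  simpa [hE.map_one] using hE.map_mul_right hb 1

lemma map_algebraMap (hE : IsConditionalExpectation B E) (r : ℝ) :
    E (algebraMap ℝ A r) = algebraMap ℝ A r := by
  rw [Algebra.algebraMap_eq_smul_one, LinearMap.map_smul_of_tower, hE.map_one]

lemma coe_imaginaryPart_map (hE : IsConditionalExpectation B E) (x : A) :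
    (ℑ (E x) : A) = E (ℑ x) := by
  simp only [imaginaryPart_apply_coe, ← hE.map_star, map_sub, map_smul,
    LinearMap.map_smul_of_tower]

lemma sub_map_sub_eq_map_mul_mul (hE : IsConditionalExpectation B E) {w y r c : A} (hw : w ∈ B)
    (hr : (w - y) * r = 1) (hc : E r * c = 1) :
    w - E y - c = E (y * (r - E r)) * c := by
  have h : E (y * r) = w * E r - 1 := by
    rw [← hE.map_mul_left hw, ← hE.map_one, ← hr, sub_mul, map_sub, sub_sub_cancel]
  rw [mul_sub, map_sub, hE.map_mul_right (hE.mem r), h, sub_mul, sub_mul, mul_assoc, mul_assoc, hc,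
    mul_one, one_mul, mul_one]
  abel

lemma coe_neg_imaginaryPart_sub_map_sub (hE : IsConditionalExpectation B E) {w y r c : A}
    (hw : w ∈ B) (hy : IsSelfAdjoint y) (hr : (w - y) * r = 1) (hc : E r * c = 1) :
    -(ℑ (w - E y - c) : A) = star c * E (star (r - E r) * ℑ w * (r - E r)) * c := by
  have hs : (ℑ w : A) ∈ B := by
    rw [coe_imaginaryPart_eq_smul]
    exact B.smul_mem (sub_mem hw (star_mem hw)) _
  set G := E r
  set u := r - G
  set s : A := (ℑ w : A)
  have hG : G ∈ B := hE.mem r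
  have hImG : -(ℑ G : A) = E (star r * s * r) := by
    rw [hE.coe_imaginaryPart_map, coe_imaginaryPart_of_mul_eq_one hr, map_sub, hy.imaginaryPart,
      sub_zero, map_neg, neg_neg]
  have hu : E (star u * s * u) = -(ℑ G : A) - star G * s * G := by
    have h₁ : E (star r * s * G) = star G * s * G := by
      rw [mul_assoc, hE.map_mul_right (mul_mem hs hG), hE.map_star, mul_assoc]
    have h₂ : E (star G * s * r) = star G * s * G := hE.map_mul_left (mul_mem (star_mem hG) hs) r
    have h₃ : E (star G * s * G) = star G * s * G :=
      hE.map_of_mem (mul_mem (mul_mem (star_mem hG) hs) hG)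
    simp only [u, star_sub, sub_mul, mul_sub, map_sub, h₁, h₂, h₃, hImG]
    abel
  have hEy : IsSelfAdjoint (E y) := by rw [IsSelfAdjoint, ← hE.map_star, hy.star_eq]
  have hGc : star c * (star G * s * G) * c = s := by
    rw [← mul_assoc, ← mul_assoc, ← star_mul, hc, star_one, one_mul, mul_assoc, hc, mul_one]
  rw [hu, map_sub, map_sub, hEy.imaginaryPart, AddSubgroupClass.coe_sub, AddSubgroupClass.coe_sub,
    coe_imaginaryPart_of_mul_eq_one hc, mul_sub, sub_mul, hGc]
  simp only [ZeroMemClass.coe_zero, mul_neg, neg_mul]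
  abel

end IsConditionalExpectation

end StarAlgebra

section CStarAlgebra

variable {A : Type*} [CStarAlgebra A]

lemma star_one_add_smul_mul_one_add_smul (x : A) (t : ℝ) :
    star (1 + (t * I) • x) * (1 + (t * I) • x) =
      1 + (t ^ 2) • (star x * x) - (2 * t) • (ℑ x : A) := by
  simp only [imaginaryPart_apply_coe, star_add, star_one, star_smul, add_mul, mul_add, one_mul,
    mul_one, smul_mul_assoc, mul_smul_comm, smul_sub, Complex.star_def, map_mul, conj_ofReal,
    conj_I]
  match_scalars <;> simp <;> ring_nf; simp [I_sq]

variable [PartialOrder A] [StarOrderedRing A]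

lemma isUnit_of_algebraMap_le_imaginaryPart {x : A} {δ : ℝ} (hδ : 0 < δ)
    (h : algebraMap ℝ A δ ≤ ℑ x) : IsUnit x := by
  obtain ⟨t, ht, htδ, htx⟩ : ∃ t : ℝ, 0 < t ∧ 2 * t * δ ≤ 1 ∧ t * ‖x‖ ^ 2 < 2 * δ := by
    have hpos : 0 < ‖x‖ ^ 2 + 2 * δ ^ 2 := by positivity
    have ht : δ / (‖x‖ ^ 2 + 2 * δ ^ 2) * (‖x‖ ^ 2 + 2 * δ ^ 2) = δ := div_mul_cancel₀ _ hpos.ne'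
    have ht₀ : 0 < δ / (‖x‖ ^ 2 + 2 * δ ^ 2) := by positivity
    refine ⟨_, ht₀, ?_, ?_⟩ <;>
      nlinarith [mul_nonneg ht₀.le (sq_nonneg ‖x‖), mul_pos ht₀ (pow_pos hδ 2)]
  set q : ℝ := 1 - 2 * t * δ + t ^ 2 * ‖x‖ ^ 2
  have hq₀ : 0 ≤ q := by nlinarith [sq_nonneg (t * ‖x‖)]
  have hq₁ : q < 1 := by nlinarith
  have hle : star (1 + (t * I) • x) * (1 + (t * I) • x) ≤ algebraMap ℝ A q := by
    rw [star_one_add_smul_mul_one_add_smul]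
    calc _ ≤ 1 + (t ^ 2) • algebraMap ℝ A (‖x‖ ^ 2) - (2 * t) • algebraMap ℝ A δ := by
          gcongr
          exact CStarAlgebra.star_mul_le_algebraMap_norm_sq
      _ = algebraMap ℝ A q := by simp only [Algebra.algebraMap_eq_smul_one, q]; module
  have hnorm : ‖1 - -((t * I) • x)‖ < 1 := by
    rw [sub_neg_eq_add, ← sq_lt_one_iff₀ (norm_nonneg _), sq, ← CStarRing.norm_star_mul_self]
    exact ((CStarAlgebra.norm_le_iff_le_algebraMap _ hq₀ (star_mul_self_nonneg _)).2 hle).trans_lt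
      hq₁
  have hc : -(t * I) ≠ 0 := by simp [ht.ne']
  rw [← isUnit_smul_iff (Units.mk0 _ hc)]
  simpa [neg_smul] using (Units.oneSub _ hnorm).isUnit

lemma norm_le_of_star_mul_self_le_smul_imaginaryPart {d : A} {c : ℝ} (hc : 0 ≤ c)
    (h : star d * d ≤ c • -(ℑ d : A)) : ‖d‖ ≤ c := by
  have h' : ‖d‖ * ‖d‖ ≤ c * ‖d‖ := by
    rw [← CStarRing.norm_star_mul_self]
    calc ‖star d * d‖ ≤ ‖c • -(ℑ d : A)‖ := CStarAlgebra.norm_le_norm_of_nonneg_of_le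
          (star_mul_self_nonneg d) h
      _ ≤ c * ‖d‖ := by
          rw [norm_smul, norm_neg, Real.norm_of_nonneg hc]
          exact mul_le_mul_of_nonneg_left (imaginaryPart.norm_le d) hc
  rcases (norm_nonneg d).eq_or_lt with h₀ | h₀
  · rw [← h₀]; exact hc
  · exact le_of_mul_le_mul_right h' h₀

namespace IsConditionalExpectation

variable {B : StarSubalgebra ℂ A} {E : A →ₗ[ℂ] A}

lemma mono (hE : IsConditionalExpectation B E) {x z : A} (h : x ≤ z) : E x ≤ E z := by
  simpa using hE.map_nonneg _ (sub_nonneg.2 h)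

lemma star_map_mul_map_le (hE : IsConditionalExpectation B E) (x : A) :
    star (E x) * E x ≤ E (star x * x) := by
  have hb := hE.mem x
  have h₁ : E (star x * E x) = star (E x) * E x := by rw [hE.map_mul_right hb, hE.map_star]
  have h₂ : E (star (E x) * x) = star (E x) * E x := hE.map_mul_left (star_mem hb) x
  have h₃ : E (star (E x) * E x) = star (E x) * E x := hE.map_of_mem (mul_mem (star_mem hb) hb)
  have h := hE.map_nonneg _ (star_mul_self_nonneg (x - E x))
  rwa [star_sub, sub_mul, mul_sub, mul_sub, map_sub, map_sub, map_sub, h₁, h₂, h₃, sub_self,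
    sub_zero, sub_nonneg] at h

lemma norm_map_le (hE : IsConditionalExpectation B E) (x : A) : ‖E x‖ ≤ ‖x‖ := by
  have h : ‖E (star x * x)‖ ≤ ‖star x * x‖ := by
    refine (CStarAlgebra.norm_le_iff_le_algebraMap _ (norm_nonneg _)
      (hE.map_nonneg _ (star_mul_self_nonneg x))).2 ?_
    rw [← hE.map_algebraMap]
    exact hE.mono (IsSelfAdjoint.star_mul_self x).le_algebraMap_norm_self
  have h' : ‖E x‖ * ‖E x‖ ≤ ‖x‖ * ‖x‖ := by
    rw [← CStarRing.norm_star_mul_self, ← CStarRing.norm_star_mul_self]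
    exact (CStarAlgebra.norm_le_norm_of_nonneg_of_le (star_mul_self_nonneg _)
      (hE.star_map_mul_map_le x)).trans h
  exact mul_self_le_mul_self_iff (norm_nonneg _) (norm_nonneg _) |>.2 h'

lemma isUnit_map_of_mul_eq_one [Nontrivial A] (hE : IsConditionalExpectation B E) {a r : A}
    {ε : ℝ} (hε : 0 < ε) (ha : algebraMap ℝ A ε ≤ ℑ a) (hr : a * r = 1) : IsUnit (E r) := by
  have ha₀ : 0 < ‖a‖ := norm_pos_iff.2 fun h ↦ by simp [h] at hr
  have h₁ : 1 ≤ (‖a‖ ^ 2) • E (star r * r) := by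
    have h := CStarAlgebra.star_left_conjugate_le_norm_smul (a := r) (b := star a * a)
    have h₁ : star r * (star a * a) * r = 1 := by
      rw [← mul_assoc, ← star_mul, mul_assoc, hr, mul_one, star_one]
    rw [CStarRing.norm_star_mul_self, ← sq, h₁] at h
    rw [← hE.map_one, ← LinearMap.map_smul_of_tower]
    exact hE.mono h
  have h₂ : ε • E (star r * r) ≤ ℑ (-E r) := by
    rw [map_neg, NegMemClass.coe_neg, hE.coe_imaginaryPart_map, coe_imaginaryPart_of_mul_eq_one hr,
      map_neg, neg_neg, ← LinearMap.map_smul_of_tower]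
    refine hE.mono ?_
    calc ε • (star r * r) = star r * algebraMap ℝ A ε * r := by
          rw [Algebra.algebraMap_eq_smul_one, mul_smul_comm, mul_one, smul_mul_assoc]
      _ ≤ star r * ℑ a * r := star_left_conjugate_le_conjugate ha _
  refine (IsUnit.neg_iff _).1 (isUnit_of_algebraMap_le_imaginaryPart (δ := ε / ‖a‖ ^ 2)
    (by positivity) ?_)
  calc algebraMap ℝ A (ε / ‖a‖ ^ 2) = (ε / ‖a‖ ^ 2) • (1 : A) :=
        Algebra.algebraMap_eq_smul_one _
    _ ≤ (ε / ‖a‖ ^ 2) • ((‖a‖ ^ 2) • E (star r * r)) := by gcongr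
    _ = ε • E (star r * r) := by rw [smul_smul, div_mul_cancel₀ _ (by positivity)]
    _ ≤ ℑ (-E r) := h₂

theorem norm_sub_map_sub_le (hE : IsConditionalExpectation B E) {w y r c : A} {ε : ℝ}
    (hε : 0 < ε) (hw : w ∈ B) (hwε : algebraMap ℝ A ε ≤ ℑ w) (hy : IsSelfAdjoint y)
    (hr : (w - y) * r = 1) (hc : E r * c = 1) :
    ‖w - E y - c‖ ≤ ‖y‖ ^ 2 / ε := by
  set u := r - E r
  set s : A := (ℑ w : A)
  have hy₂ : star y * y ≤ (‖y‖ ^ 2 / ε) • s := by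
    calc star y * y ≤ algebraMap ℝ A (‖y‖ ^ 2) := CStarAlgebra.star_mul_le_algebraMap_norm_sq
      _ = (‖y‖ ^ 2 / ε) • algebraMap ℝ A ε := by
          rw [Algebra.algebraMap_eq_smul_one, Algebra.algebraMap_eq_smul_one, smul_smul,
            div_mul_cancel₀ _ hε.ne']
      _ ≤ (‖y‖ ^ 2 / ε) • s := by gcongr
  refine norm_le_of_star_mul_self_le_smul_imaginaryPart (by positivity) ?_
  rw [hE.coe_neg_imaginaryPart_sub_map_sub hw hy hr hc, hE.sub_map_sub_eq_map_mul_mul hw hr hc]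
  calc star (E (y * u) * c) * (E (y * u) * c) = star c * (star (E (y * u)) * E (y * u)) * c := by
        simp only [star_mul, mul_assoc]
    _ ≤ star c * E (star (y * u) * (y * u)) * c :=
        star_left_conjugate_le_conjugate (hE.star_map_mul_map_le _) c
    _ = star c * E (star u * (star y * y) * u) * c := by simp only [star_mul, mul_assoc]
    _ ≤ star c * E (star u * ((‖y‖ ^ 2 / ε) • s) * u) * c :=
        star_left_conjugate_le_conjugate (hE.mono (star_left_conjugate_le_conjugate hy₂ u)) c
    _ = (‖y‖ ^ 2 / ε) • (star c * E (star u * s * u) * c) := by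
        rw [mul_smul_comm, smul_mul_assoc, LinearMap.map_smul_of_tower, mul_smul_comm,
          smul_mul_assoc]

end IsConditionalExpectation

end CStarAlgebra

theorem h_transform_norm_bound_general {M : Type*} [NormedRing M] [StarRing M] [CStarRing M]
    [CompleteSpace M] [NormedAlgebra ℂ M] [StarModule ℂ M]
    [PartialOrder M] [StarOrderedRing M]
    (B : StarSubalgebra ℂ M) (E : M →ₗ[ℂ] M)
    (hE1 : E 1 = 1)
    (hEmem : ∀ m : M, E m ∈ B)
    (hEpos : ∀ m : M, 0 ≤ m → 0 ≤ E m)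
    (hEstar : ∀ m : M, E (star m) = star (E m))
    (hEbimod : ∀ b₁ ∈ B, ∀ b₂ ∈ B, ∀ m : M, E (b₁ * m * b₂) = b₁ * E m * b₂)
    (y : M) (hy : star y = y)
    (ε : ℝ) (hε : 0 < ε)
    (w : M) (hw : w ∈ B)
    (him : (ε : ℂ) • (1 : M) ≤ ((2 * Complex.I)⁻¹ : ℂ) • (w - star w)) :
    ‖Ring.inverse (E (Ring.inverse (w - y))) - w‖ ≤ 4 * ‖y‖ * (1 + 2 * ε⁻¹ * ‖y‖) := by
  let _ : CStarAlgebra M := { ‹NormedRing M›, ‹StarRing M›, ‹CStarRing M›, ‹NormedAlgebra ℂ M›,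
    ‹StarModule ℂ M›, ‹CompleteSpace M› with }
  rcases subsingleton_or_nontrivial M with _ | _
  · rw [Subsingleton.elim (_ - w) 0, norm_zero]
    positivity
  have hE : IsConditionalExpectation B E := ⟨hE1, hEmem, hEpos, hEstar, hEbimod⟩
  have hy : IsSelfAdjoint y := hy
  have hwε : algebraMap ℝ M ε ≤ ℑ w := by
    rwa [coe_imaginaryPart_eq_smul, Algebra.algebraMap_eq_smul_one, ← Complex.coe_smul]
  have haε : algebraMap ℝ M ε ≤ ℑ (w - y) := by rwa [map_sub, hy.imaginaryPart, sub_zero]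
  have hr := Ring.mul_inverse_cancel _ (isUnit_of_algebraMap_le_imaginaryPart hε haε)
  have hc := Ring.mul_inverse_cancel _ (hE.isUnit_map_of_mul_eq_one hε haε hr)
  calc ‖Ring.inverse (E (Ring.inverse (w - y))) - w‖
      = ‖(w - E y - Ring.inverse (E (Ring.inverse (w - y)))) + E y‖ := by
        rw [← norm_neg]; congr 1; abel
    _ ≤ ‖y‖ ^ 2 / ε + ‖y‖ :=
        norm_add_le_of_le (hE.norm_sub_map_sub_le hε hw hwε hy hr hc) (hE.norm_map_le y)
    _ ≤ 4 * ‖y‖ * (1 + 2 * ε⁻¹ * ‖y‖) := by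
        have : 0 ≤ ‖y‖ ^ 2 / ε := by positivity
        rw [div_eq_mul_inv] at this ⊢
        nlinarith [norm_nonneg y]

/-- Norm bound for the `h` transform `h_y(w) = E[(w−y)⁻¹]⁻¹ − w` on the shifted
operator upper half-plane: if `Im w ≥ ε·1` then
`‖h_y(w)‖ ≤ 4‖y‖(1 + 2ε⁻¹‖y‖)`. -/
theorem h_transform_norm_bound {M : Type*} [NormedRing M] [StarRing M] [CStarRing M]
    [CompleteSpace M] [NormedAlgebra ℂ M] [StarModule ℂ M]
    [PartialOrder M] [StarOrderedRing M]
    (B : StarSubalgebra ℂ M) (E : M →ₗ[ℂ] M)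
    (hE1 : E 1 = 1)
    (hEmem : ∀ m : M, E m ∈ B)
    (hEid : ∀ b ∈ B, E b = b)
    (hEpos : ∀ m : M, 0 ≤ m → 0 ≤ E m)
    (hEstar : ∀ m : M, E (star m) = star (E m))
    (hEbimod : ∀ b₁ ∈ B, ∀ b₂ ∈ B, ∀ m : M, E (b₁ * m * b₂) = b₁ * E m * b₂)
    (y : M) (hy : star y = y)
    (ε : ℝ) (hε : 0 < ε)
    (w : M) (hw : w ∈ B)
    (him : (ε : ℂ) • (1 : M) ≤ ((2 * Complex.I)⁻¹ : ℂ) • (w - star w)) :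
    ‖Ring.inverse (E (Ring.inverse (w - y))) - w‖ ≤ 4 * ‖y‖ * (1 + 2 * ε⁻¹ * ‖y‖) :=
  h_transform_norm_bound_general B E hE1 hEmem hEpos hEstar hEbimod y hy ε hε w hw him
end

section
/- Every noncommutative polynomial p ∈ ℂ⟨X₁,…,Xₙ⟩ admits a linearization: there exist N ∈ ℕ and matrices b₀,…,bₙ ∈ M_N(ℂ) such that L_p := b₀⊗1 + Σⱼ bⱼ⊗Xⱼ has block form [[0, u],[v, Q]] with Q ∈ M_{N−1}(ℂ⟨X₁,…,Xₙ⟩) invertible, u a row and v a column of length N−1 with entries of degree ≤ 1, and p = −u Q⁻¹ v. -/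
/-- The linear pencil `L = b₀ ⊗ 1 + ∑ⱼ bⱼ ⊗ Xⱼ` over the free algebra,
indexed so that the first row/column is singled out. -/
noncomputable def linMat (n m : ℕ) (b₀ : Matrix (Unit ⊕ Fin m) (Unit ⊕ Fin m) ℂ)
    (b : Fin n → Matrix (Unit ⊕ Fin m) (Unit ⊕ Fin m) ℂ) :
    Matrix (Unit ⊕ Fin m) (Unit ⊕ Fin m) (FreeAlgebra ℂ (Fin n)) :=
  Matrix.of fun i j =>
    algebraMap ℂ (FreeAlgebra ℂ (Fin n)) (b₀ i j) +
      ∑ k : Fin n, b k i j • FreeAlgebra.ι ℂ k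

namespace Test
set_option maxHeartbeats 1000000
open Matrix

abbrev FA (n : ℕ) := FreeAlgebra ℂ (Fin n)

noncomputable def pencil (n : ℕ) {ι : Type} (b₀ : Matrix (Unit ⊕ ι) (Unit ⊕ ι) ℂ)
    (b : Fin n → Matrix (Unit ⊕ ι) (Unit ⊕ ι) ℂ) :
    Matrix (Unit ⊕ ι) (Unit ⊕ ι) (FA n) :=
  Matrix.of fun i j =>
    algebraMap ℂ (FA n) (b₀ i j) + ∑ k : Fin n, b k i j • FreeAlgebra.ι ℂ k

def LinOn (ι : Type) [Fintype ι] [DecidableEq ι] (n : ℕ) (p : FA n) : Prop :=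
  ∃ (b₀ : Matrix (Unit ⊕ ι) (Unit ⊕ ι) ℂ) (b : Fin n → Matrix (Unit ⊕ ι) (Unit ⊕ ι) ℂ)
    (Q' : Matrix ι ι (FA n)),
    pencil n b₀ b (Sum.inl ()) (Sum.inl ()) = 0 ∧
    (Matrix.of fun i j : ι => pencil n b₀ b (Sum.inr i) (Sum.inr j)) * Q' = 1 ∧
    Q' * (Matrix.of fun i j : ι => pencil n b₀ b (Sum.inr i) (Sum.inr j)) = 1 ∧
    p = -∑ i : ι, ∑ j : ι,
      pencil n b₀ b (Sum.inl ()) (Sum.inr i) * Q' i j * pencil n b₀ b (Sum.inr j) (Sum.inl ())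

variable {n : ℕ} {ι κ : Type} [Fintype ι] [DecidableEq ι] [Fintype κ] [DecidableEq κ]

lemma linOn_reindex (e : ι ≃ κ) {p : FA n} (h : LinOn ι n p) : LinOn κ n p := by
  obtain ⟨b₀, b, Q', h0, h1, h2, h3⟩ := h
  set f : (Unit ⊕ κ) → (Unit ⊕ ι) := Sum.map id e.symm with hf
  have key : pencil n (b₀.submatrix f f) (fun k => (b k).submatrix f f)
      = (pencil n b₀ b).submatrix f f := rfl
  have hQ : (Matrix.of fun i j : κ =>
        pencil n (b₀.submatrix f f) (fun k => (b k).submatrix f f) (Sum.inr i) (Sum.inr j))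
      = (Matrix.of fun i j : ι => pencil n b₀ b (Sum.inr i) (Sum.inr j)).submatrix
          e.symm e.symm := rfl
  refine ⟨b₀.submatrix f f, fun k => (b k).submatrix f f, Q'.submatrix e.symm e.symm,
    ?_, ?_, ?_, ?_⟩
  · exact h0
  · rw [hQ, Matrix.submatrix_mul_equiv _ _ _ e.symm, h1, Matrix.submatrix_one_equiv]
  · rw [hQ, Matrix.submatrix_mul_equiv _ _ _ e.symm, h2, Matrix.submatrix_one_equiv]
  · rw [h3]
    congr 1
    refine (Fintype.sum_equiv e.symm
      (fun i : κ => ∑ j : κ, pencil n (b₀.submatrix f f) (fun k => (b k).submatrix f f)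
          (Sum.inl ()) (Sum.inr i) * (Q'.submatrix e.symm e.symm) i j *
          pencil n (b₀.submatrix f f) (fun k => (b k).submatrix f f) (Sum.inr j) (Sum.inl ()))
      (fun i : ι => ∑ j : ι, pencil n b₀ b (Sum.inl ()) (Sum.inr i) * Q' i j *
          pencil n b₀ b (Sum.inr j) (Sum.inl ())) (fun i => ?_)).symm
    refine Fintype.sum_equiv e.symm _ _ fun j => ?_
    rfl


lemma linOn_algebraMap (c : ℂ) : LinOn Unit n (algebraMap ℂ (FA n) c) := by
  refine ⟨Matrix.of fun x y => match x, y with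
      | Sum.inl _, Sum.inl _ => 0
      | Sum.inl _, Sum.inr _ => c
      | Sum.inr _, Sum.inl _ => 1
      | Sum.inr _, Sum.inr _ => -1,
    0, Matrix.of fun _ _ => -1, ?_, ?_, ?_, ?_⟩
  · simp [pencil]
  · ext i j
    simp [pencil, Matrix.mul_apply, Matrix.one_apply]
  · ext i j
    simp [pencil, Matrix.mul_apply, Matrix.one_apply]
  · simp [pencil]

lemma linOn_smul (c : ℂ) {p : FA n} (h : LinOn ι n p) : LinOn ι n (c • p) := by
  obtain ⟨b₀, b, Q', h0, h1, h2, h3⟩ := h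
  refine ⟨Matrix.of fun x y => match x with
      | Sum.inl _ => c * b₀ x y
      | Sum.inr _ => b₀ x y,
    fun k => Matrix.of fun x y => match x with
      | Sum.inl _ => c * b k x y
      | Sum.inr _ => b k x y,
    Q', ?_, ?_, ?_, ?_⟩
  · have : ∀ y, pencil n (Matrix.of fun x y => match x with
        | Sum.inl _ => c * b₀ x y
        | Sum.inr _ => b₀ x y)
        (fun k => Matrix.of fun x y => match x with
          | Sum.inl _ => c * b k x y
          | Sum.inr _ => b k x y) (Sum.inl ()) y
        = c • pencil n b₀ b (Sum.inl ()) y := by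
      intro y
      simp [pencil, smul_add, Finset.smul_sum, Algebra.smul_def, _root_.map_mul,
        mul_add, Finset.mul_sum, mul_assoc]
    rw [this, h0, smul_zero]
  · exact h1
  · exact h2
  · have hu : ∀ y, pencil n (Matrix.of fun x y => match x with
        | Sum.inl _ => c * b₀ x y
        | Sum.inr _ => b₀ x y)
        (fun k => Matrix.of fun x y => match x with
          | Sum.inl _ => c * b k x y
          | Sum.inr _ => b k x y) (Sum.inl ()) y
        = c • pencil n b₀ b (Sum.inl ()) y := by
      intro y
      simp [pencil, smul_add, Finset.smul_sum, Algebra.smul_def, _root_.map_mul,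
        mul_add, Finset.mul_sum, mul_assoc]
    have hv : ∀ (x : ι) y, pencil n (Matrix.of fun x y => match x with
        | Sum.inl _ => c * b₀ x y
        | Sum.inr _ => b₀ x y)
        (fun k => Matrix.of fun x y => match x with
          | Sum.inl _ => c * b k x y
          | Sum.inr _ => b k x y) (Sum.inr x) y
        = pencil n b₀ b (Sum.inr x) y := fun _ _ => rfl
    rw [h3, smul_neg]
    congr 1
    rw [Finset.smul_sum]
    refine Finset.sum_congr rfl fun i _ => ?_
    rw [Finset.smul_sum]
    refine Finset.sum_congr rfl fun j _ => ?_
    rw [hu, hv, smul_mul_assoc, smul_mul_assoc]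
def glue {R : Type*} [Zero R] {ι κ : Type}
    (A : Matrix (Unit ⊕ ι) (Unit ⊕ ι) R) (B : Matrix (Unit ⊕ κ) (Unit ⊕ κ) R) :
    Matrix (Unit ⊕ (ι ⊕ κ)) (Unit ⊕ (ι ⊕ κ)) R :=
  Matrix.of fun x y =>
    match x, y with
    | Sum.inl _, Sum.inl _ => 0
    | Sum.inl _, Sum.inr (Sum.inl j) => A (Sum.inl ()) (Sum.inr j)
    | Sum.inl _, Sum.inr (Sum.inr j) => B (Sum.inl ()) (Sum.inr j)
    | Sum.inr (Sum.inl i), Sum.inl _ => A (Sum.inr i) (Sum.inl ())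
    | Sum.inr (Sum.inr i), Sum.inl _ => B (Sum.inr i) (Sum.inl ())
    | Sum.inr (Sum.inl i), Sum.inr (Sum.inl j) => A (Sum.inr i) (Sum.inr j)
    | Sum.inr (Sum.inr i), Sum.inr (Sum.inr j) => B (Sum.inr i) (Sum.inr j)
    | Sum.inr (Sum.inl _), Sum.inr (Sum.inr _) => 0
    | Sum.inr (Sum.inr _), Sum.inr (Sum.inl _) => 0

lemma pencil_glue (b₀ : Matrix (Unit ⊕ ι) (Unit ⊕ ι) ℂ)
    (b : Fin n → Matrix (Unit ⊕ ι) (Unit ⊕ ι) ℂ)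
    (c₀ : Matrix (Unit ⊕ κ) (Unit ⊕ κ) ℂ)
    (c : Fin n → Matrix (Unit ⊕ κ) (Unit ⊕ κ) ℂ) :
    pencil n (glue b₀ c₀) (fun k => glue (b k) (c k))
      = glue (pencil n b₀ b) (pencil n c₀ c) := by
  ext x y
  rcases x with _ | (i | i) <;> rcases y with _ | (j | j) <;>
    simp [pencil, glue]

lemma linOn_add {p q : FA n} (hp : LinOn ι n p) (hq : LinOn κ n q) :
    LinOn (ι ⊕ κ) n (p + q) := by
  obtain ⟨b₀, b, P', h0, h1, h2, h3⟩ := hp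
  obtain ⟨c₀, c, R', g0, g1, g2, g3⟩ := hq
  refine ⟨glue b₀ c₀, fun k => glue (b k) (c k), Matrix.fromBlocks P' 0 0 R', ?_, ?_, ?_, ?_⟩
  · rw [pencil_glue]; rfl
  · have : (Matrix.of fun i j : ι ⊕ κ =>
        pencil n (glue b₀ c₀) (fun k => glue (b k) (c k)) (Sum.inr i) (Sum.inr j))
        = Matrix.fromBlocks
            (Matrix.of fun i j : ι => pencil n b₀ b (Sum.inr i) (Sum.inr j)) 0 0
            (Matrix.of fun i j : κ => pencil n c₀ c (Sum.inr i) (Sum.inr j)) := by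
      rw [pencil_glue]
      ext x y
      rcases x with i | i <;> rcases y with j | j <;> simp [glue, Matrix.fromBlocks]
    rw [this, Matrix.fromBlocks_multiply]
    simp [h1, g1, Matrix.fromBlocks_one]
  · have : (Matrix.of fun i j : ι ⊕ κ =>
        pencil n (glue b₀ c₀) (fun k => glue (b k) (c k)) (Sum.inr i) (Sum.inr j))
        = Matrix.fromBlocks
            (Matrix.of fun i j : ι => pencil n b₀ b (Sum.inr i) (Sum.inr j)) 0 0
            (Matrix.of fun i j : κ => pencil n c₀ c (Sum.inr i) (Sum.inr j)) := by
      rw [pencil_glue]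
      ext x y
      rcases x with i | i <;> rcases y with j | j <;> simp [glue, Matrix.fromBlocks]
    rw [this, Matrix.fromBlocks_multiply]
    simp [h2, g2, Matrix.fromBlocks_one]
  · rw [h3, g3, pencil_glue]
    rw [Fintype.sum_sum_type]
    simp only [Fintype.sum_sum_type]
    simp only [glue, Matrix.of_apply, Matrix.fromBlocks_apply₁₁,
      Matrix.fromBlocks_apply₁₂, Matrix.fromBlocks_apply₂₁, Matrix.fromBlocks_apply₂₂,
      Matrix.zero_apply, mul_zero, zero_mul, Finset.sum_const_zero, add_zero, zero_add]
    abel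

lemma linOn_mul (k : Fin n) {p : FA n} (h : LinOn ι n p) :
    LinOn (Unit ⊕ ι) n (FreeAlgebra.ι ℂ k * p) := by
  obtain ⟨b₀, b, Q', h0, h1, h2, h3⟩ := h
  set c₀ : Matrix (Unit ⊕ (Unit ⊕ ι)) (Unit ⊕ (Unit ⊕ ι)) ℂ := Matrix.of fun x y =>
    match x, y with
    | Sum.inr (Sum.inl _), Sum.inr (Sum.inl _) => -1
    | Sum.inr (Sum.inl _), Sum.inr (Sum.inr j) => b₀ (Sum.inl ()) (Sum.inr j)
    | Sum.inr (Sum.inr i), Sum.inl _ => b₀ (Sum.inr i) (Sum.inl ())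
    | Sum.inr (Sum.inr i), Sum.inr (Sum.inr j) => b₀ (Sum.inr i) (Sum.inr j)
    | _, _ => 0 with hc₀
  set c : Fin n → Matrix (Unit ⊕ (Unit ⊕ ι)) (Unit ⊕ (Unit ⊕ ι)) ℂ := fun k' =>
    Matrix.of fun x y =>
    match x, y with
    | Sum.inl _, Sum.inr (Sum.inl _) => if k' = k then 1 else 0
    | Sum.inr (Sum.inl _), Sum.inr (Sum.inr j) => b k' (Sum.inl ()) (Sum.inr j)
    | Sum.inr (Sum.inr i), Sum.inl _ => b k' (Sum.inr i) (Sum.inl ())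
    | Sum.inr (Sum.inr i), Sum.inr (Sum.inr j) => b k' (Sum.inr i) (Sum.inr j)
    | _, _ => 0 with hc
  have e00 : pencil n c₀ c (Sum.inl ()) (Sum.inl ()) = 0 := by simp [pencil, hc₀, hc]
  have e01 : pencil n c₀ c (Sum.inl ()) (Sum.inr (Sum.inl ())) = FreeAlgebra.ι ℂ k := by
    simp [pencil, hc₀, hc, ite_smul, Finset.sum_ite_eq']
  have e02 : ∀ j : ι, pencil n c₀ c (Sum.inl ()) (Sum.inr (Sum.inr j)) = 0 := by
    intro j; simp [pencil, hc₀, hc]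
  have e10 : pencil n c₀ c (Sum.inr (Sum.inl ())) (Sum.inl ()) = 0 := by
    simp [pencil, hc₀, hc]
  have e20 : ∀ i : ι, pencil n c₀ c (Sum.inr (Sum.inr i)) (Sum.inl ())
      = pencil n b₀ b (Sum.inr i) (Sum.inl ()) := by
    intro i; simp [pencil, hc₀, hc]
  have e11 : pencil n c₀ c (Sum.inr (Sum.inl ())) (Sum.inr (Sum.inl ())) = -1 := by
    simp [pencil, hc₀, hc, map_neg, _root_.map_one]
  have e12 : ∀ j : ι, pencil n c₀ c (Sum.inr (Sum.inl ())) (Sum.inr (Sum.inr j))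
      = pencil n b₀ b (Sum.inl ()) (Sum.inr j) := by
    intro j; simp [pencil, hc₀, hc]
  have e21 : ∀ i : ι, pencil n c₀ c (Sum.inr (Sum.inr i)) (Sum.inr (Sum.inl ())) = 0 := by
    intro i; simp [pencil, hc₀, hc]
  have e22 : ∀ i j : ι, pencil n c₀ c (Sum.inr (Sum.inr i)) (Sum.inr (Sum.inr j))
      = pencil n b₀ b (Sum.inr i) (Sum.inr j) := by
    intro i j; simp [pencil, hc₀, hc]
  set U : Matrix Unit ι (FA n) :=
    Matrix.of fun _ j => pencil n b₀ b (Sum.inl ()) (Sum.inr j) with hU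
  set D : Matrix ι ι (FA n) :=
    Matrix.of fun i j => pencil n b₀ b (Sum.inr i) (Sum.inr j) with hD
  have hQnew : (Matrix.of fun i j : Unit ⊕ ι =>
      pencil n c₀ c (Sum.inr i) (Sum.inr j))
      = Matrix.fromBlocks (-1) U 0 D := by
    ext x y
    rcases x with ⟨⟩ | i <;> rcases y with ⟨⟩ | j <;>
      simp [e11, e12, e21, e22, hU, hD]
  refine ⟨c₀, c, Matrix.fromBlocks (-1) (U * Q') 0 Q', e00, ?_, ?_, ?_⟩
  · rw [hQnew, Matrix.fromBlocks_multiply]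
    simp only [Matrix.neg_mul, Matrix.mul_neg, neg_neg, Matrix.one_mul, Matrix.mul_one,
      Matrix.mul_zero, Matrix.zero_mul, add_zero, zero_add, h1, neg_add_cancel, neg_zero]
    rw [← Matrix.fromBlocks_one]
  · rw [hQnew, Matrix.fromBlocks_multiply]
    simp only [Matrix.neg_mul, Matrix.mul_neg, neg_neg, Matrix.one_mul, Matrix.mul_one,
      Matrix.mul_zero, Matrix.zero_mul, add_zero, zero_add, h2, Matrix.mul_assoc,
      neg_add_cancel, neg_zero]
    rw [← Matrix.fromBlocks_one]
  · rw [Fintype.sum_sum_type]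
    simp only [Fintype.sum_sum_type]
    simp only [e01, e02, e10, e20, Matrix.fromBlocks_apply₁₁, Matrix.fromBlocks_apply₁₂,
      Matrix.fromBlocks_apply₂₁, Matrix.fromBlocks_apply₂₂, Matrix.zero_apply,
      mul_zero, zero_mul, Finset.sum_const_zero, add_zero, zero_add]
    rw [h3]
    simp only [Matrix.mul_apply, hU, Matrix.of_apply, Finset.univ_unique]
    simp only [Finset.sum_mul, Finset.mul_sum, mul_neg, neg_mul, mul_assoc]
    rw [Finset.sum_comm]
    simp

lemma lin_of_linOn {p : FA n} (h : LinOn ι n p) : ∃ m, LinOn (Fin m) n p :=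
  ⟨_, linOn_reindex (Fintype.equivFin ι) h⟩

def Lin (n : ℕ) (p : FA n) : Prop := ∃ m, LinOn (Fin m) n p

lemma lin_algebraMap (c : ℂ) : Lin n (algebraMap ℂ (FA n) c) :=
  lin_of_linOn (linOn_algebraMap c)

lemma lin_smul (c : ℂ) {p : FA n} (h : Lin n p) : Lin n (c • p) := by
  obtain ⟨m, hm⟩ := h
  exact lin_of_linOn (linOn_smul c hm)

lemma lin_add {p q : FA n} (hp : Lin n p) (hq : Lin n q) : Lin n (p + q) := by
  obtain ⟨m₁, h₁⟩ := hp
  obtain ⟨m₂, h₂⟩ := hq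
  exact lin_of_linOn (linOn_add h₁ h₂)

lemma lin_mul (k : Fin n) {p : FA n} (h : Lin n p) : Lin n (FreeAlgebra.ι ℂ k * p) := by
  obtain ⟨m, hm⟩ := h
  exact lin_of_linOn (linOn_mul k hm)

lemma lin_all (p : FA n) : Lin n p := by
  have key : ∀ a : FA n, ∀ q : FA n, Lin n q → Lin n (a * q) := by
    intro a
    induction a using FreeAlgebra.induction with
    | grade0 r => intro q hq; rw [← Algebra.smul_def]; exact lin_smul r hq
    | grade1 i => intro q hq; exact lin_mul i hq
    | mul a b ha hb => intro q hq; rw [mul_assoc]; exact ha _ (hb _ hq)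
    | add a b ha hb => intro q hq; rw [add_mul]; exact lin_add (ha _ hq) (hb _ hq)
  have h1 : Lin n (1 : FA n) := by
    have := lin_algebraMap (n := n) 1
    rwa [_root_.map_one] at this
  have := key p 1 h1
  rwa [mul_one] at this

end Test

/-- Every noncommutative polynomial admits a linearization: a linear pencil
`L = [[0,u],[v,Q]]` with `Q` invertible and `p = −u Q⁻¹ v`. -/
theorem exists_linearization (n : ℕ) (p : FreeAlgebra ℂ (Fin n)) :
    ∃ (m : ℕ) (b₀ : Matrix (Unit ⊕ Fin m) (Unit ⊕ Fin m) ℂ)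
      (b : Fin n → Matrix (Unit ⊕ Fin m) (Unit ⊕ Fin m) ℂ)
      (Q' : Matrix (Fin m) (Fin m) (FreeAlgebra ℂ (Fin n))),
      linMat n m b₀ b (Sum.inl ()) (Sum.inl ()) = 0 ∧
      (Matrix.of fun i j : Fin m => linMat n m b₀ b (Sum.inr i) (Sum.inr j)) * Q' = 1 ∧
      Q' * (Matrix.of fun i j : Fin m => linMat n m b₀ b (Sum.inr i) (Sum.inr j)) = 1 ∧
      p = -∑ i : Fin m, ∑ j : Fin m,
        linMat n m b₀ b (Sum.inl ()) (Sum.inr i) * Q' i j *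
          linMat n m b₀ b (Sum.inr j) (Sum.inl ()) := by
  obtain ⟨m, b₀, b, Q', h0, h1, h2, h3⟩ := Test.lin_all (n := n) p
  exact ⟨m, b₀, b, Q', h0, h1, h2, h3⟩
end

section
/- Let A be a complex unital algebra, x₁,…,xₙ ∈ A, p ∈ ℂ⟨X₁,…,Xₙ⟩ with linearization L_p = b₀⊗1 + Σ bⱼ⊗Xⱼ ∈ M_N(ℂ⟨X⟩), and set P := p(x₁,…,xₙ) and L_P := b₀⊗1 + Σ bⱼ⊗xⱼ ∈ M_N(A). Then for z ∈ ℂ, z·1 − P is invertible in A if and only if Λ(z) − L_P is invertible in M_N(A), where Λ(z) is the matrix with (1,1)-entry z and all other entries 0; and in that case the (1,1)-entry of (Λ(z) − L_P)⁻¹ equals (z − P)⁻¹. -/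
open Matrix

namespace Matrix

theorem toBlocks₁₂_mul_mul_toBlocks₂₁_apply {ι n α : Type*} [Fintype n]
    [NonUnitalNonAssocSemiring α] (M : Matrix (ι ⊕ n) (ι ⊕ n) α)
    (Q : Matrix n n α) (i j : ι) :
    (M.toBlocks₁₂ * Q * M.toBlocks₂₁) i j =
      ∑ k, ∑ l, M (Sum.inl i) (Sum.inr k) * Q k l * M (Sum.inr l) (Sum.inl j) := by
  simp only [mul_apply, Finset.sum_mul]
  exact Finset.sum_comm

-- Mathlib's Schur complement lemmas (`Matrix.fromBlocks₂₂Invertible` etc.) assume a commutative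
-- ring, while the coefficients here live in a noncommutative algebra.
variable {m n α : Type*} [Fintype n] [DecidableEq n] [Ring α]
  {A : Matrix m m α} {B : Matrix m n α} {C : Matrix n m α} {D : Matrix n n α} [Invertible D]

theorem map_schur {β F : Type*} [Ring β] [FunLike F α β] [RingHomClass F α β] (f : F)
    [Invertible (D.map f)] :
    (A - B * ⅟D * C).map f = A.map f - B.map f * ⅟(D.map f) * C.map f := by
  have : ⅟(D.map f) = (⅟D).map f := invOf_eq_right_inv <| by
    rw [← Matrix.map_mul, mul_invOf_self, Matrix.map_one _ (map_zero f) (map_one f)]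
  rw [this, Matrix.map_sub _ (map_sub f), Matrix.map_mul, Matrix.map_mul]

variable [Fintype m] [DecidableEq m]

theorem schur_mul_toBlocks₁₁_of_fromBlocks_mul_eq_one {N : Matrix (m ⊕ n) (m ⊕ n) α}
    (h : fromBlocks A B C D * N = 1) : (A - B * ⅟D * C) * N.toBlocks₁₁ = 1 := by
  rw [← fromBlocks_toBlocks N, fromBlocks_multiply, ← fromBlocks_one, fromBlocks_inj] at h
  obtain ⟨h₁₁, -, h₂₁, -⟩ := h
  have h₂₁' : N.toBlocks₂₁ = ⅟D * -(C * N.toBlocks₁₁) :=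
    Matrix.mul_left_eq_iff_eq_invOf_mul.mp (eq_neg_of_add_eq_zero_right h₂₁)
  rw [← h₁₁, h₂₁', Matrix.sub_mul]
  simp only [Matrix.mul_neg, Matrix.mul_assoc, sub_eq_add_neg]

theorem toBlocks₁₁_mul_schur_of_mul_fromBlocks_eq_one {N : Matrix (m ⊕ n) (m ⊕ n) α}
    (h : N * fromBlocks A B C D = 1) : N.toBlocks₁₁ * (A - B * ⅟D * C) = 1 := by
  rw [← fromBlocks_toBlocks N, fromBlocks_multiply, ← fromBlocks_one, fromBlocks_inj] at h
  obtain ⟨h₁₁, h₁₂, -, -⟩ := h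
  have h₁₂' : N.toBlocks₁₂ = -(N.toBlocks₁₁ * B) * ⅟D :=
    Matrix.mul_right_eq_iff_eq_mul_invOf.mp (eq_neg_of_add_eq_zero_right h₁₂)
  rw [← h₁₁, h₁₂', Matrix.mul_sub]
  simp only [Matrix.neg_mul, Matrix.mul_assoc, sub_eq_add_neg]

theorem fromBlocks_mul_eq_one_of_schur_mul_eq_one {s : Matrix m m α}
    (h : (A - B * ⅟D * C) * s = 1) :
    fromBlocks A B C D *
      fromBlocks s (-(s * B * ⅟D)) (-(⅟D * C * s)) (⅟D + ⅟D * C * s * B * ⅟D) = 1 := by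
  rw [fromBlocks_multiply, ← fromBlocks_one]
  congr 1
  · rw [← h, Matrix.sub_mul]
    simp only [Matrix.mul_neg, Matrix.mul_assoc, sub_eq_add_neg]
  · calc A * -(s * B * ⅟D) + B * (⅟D + ⅟D * C * s * B * ⅟D)
        = -((A - B * ⅟D * C) * s * (B * ⅟D)) + B * ⅟D := by
          simp only [Matrix.sub_mul, Matrix.mul_neg, Matrix.mul_add, Matrix.mul_assoc]; abel
      _ = 0 := by rw [h, Matrix.one_mul, neg_add_cancel]
  · simp only [Matrix.mul_neg, Matrix.mul_assoc, Matrix.mul_invOf_cancel_left, add_neg_cancel]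
  · simp only [Matrix.mul_neg, Matrix.mul_add, mul_invOf_self, Matrix.mul_assoc,
      Matrix.mul_invOf_cancel_left]
    abel

theorem mul_fromBlocks_eq_one_of_mul_schur_eq_one {s : Matrix m m α}
    (h : s * (A - B * ⅟D * C) = 1) :
    fromBlocks s (-(s * B * ⅟D)) (-(⅟D * C * s)) (⅟D + ⅟D * C * s * B * ⅟D) *
      fromBlocks A B C D = 1 := by
  rw [fromBlocks_multiply, ← fromBlocks_one]
  congr 1
  · rw [← h, Matrix.mul_sub]
    simp only [Matrix.neg_mul, Matrix.mul_assoc, sub_eq_add_neg]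
  · simp only [Matrix.neg_mul, Matrix.mul_assoc, invOf_mul_self, Matrix.mul_one, add_neg_cancel]
  · calc -(⅟D * C * s) * A + (⅟D + ⅟D * C * s * B * ⅟D) * C
        = -((⅟D * C) * (s * (A - B * ⅟D * C))) + ⅟D * C := by
          simp only [Matrix.mul_sub, Matrix.neg_mul, Matrix.add_mul, Matrix.mul_assoc]; abel
      _ = 0 := by rw [h, Matrix.mul_one, neg_add_cancel]
  · simp only [Matrix.neg_mul, Matrix.add_mul, invOf_mul_self, Matrix.mul_assoc, Matrix.mul_one]
    abel

theorem isUnit_fromBlocks_iff_isUnit_schur :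
    IsUnit (fromBlocks A B C D) ↔ IsUnit (A - B * ⅟D * C) :=
  ⟨fun h => isUnit_iff_exists.mpr ⟨_,
      schur_mul_toBlocks₁₁_of_fromBlocks_mul_eq_one (Ring.mul_inverse_cancel _ h),
      toBlocks₁₁_mul_schur_of_mul_fromBlocks_eq_one (Ring.inverse_mul_cancel _ h)⟩,
    fun h => isUnit_iff_exists.mpr ⟨_,
      fromBlocks_mul_eq_one_of_schur_mul_eq_one (Ring.mul_inverse_cancel _ h),
      mul_fromBlocks_eq_one_of_mul_schur_eq_one (Ring.inverse_mul_cancel _ h)⟩⟩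

theorem toBlocks₁₁_inverse_fromBlocks :
    (Ring.inverse (fromBlocks A B C D)).toBlocks₁₁ = Ring.inverse (A - B * ⅟D * C) := by
  by_cases h : IsUnit (fromBlocks A B C D)
  · exact (Ring.inverse_unit ⟨_, _, schur_mul_toBlocks₁₁_of_fromBlocks_mul_eq_one
      (Ring.mul_inverse_cancel _ h), toBlocks₁₁_mul_schur_of_mul_fromBlocks_eq_one
      (Ring.inverse_mul_cancel _ h)⟩).symm
  · rw [Ring.inverse_non_unit _ h,
      Ring.inverse_non_unit _ (mt isUnit_fromBlocks_iff_isUnit_schur.mpr h)]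
    rfl

theorem isUnit_map_fromBlocks_iff {β F : Type*} [Ring β] [FunLike F α β] [RingHomClass F α β]
    (f : F) :
    IsUnit ((fromBlocks A B C D).map f) ↔ IsUnit ((A - B * ⅟D * C).map f) := by
  let _ : Invertible (D.map f) := Invertible.map (f : α →+* β).mapMatrix D
  rw [fromBlocks_map, isUnit_fromBlocks_iff_isUnit_schur, map_schur]

theorem toBlocks₁₁_inverse_map_fromBlocks {β F : Type*} [Ring β] [FunLike F α β]
    [RingHomClass F α β] (f : F) :
    (Ring.inverse ((fromBlocks A B C D).map f)).toBlocks₁₁ =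
      Ring.inverse ((A - B * ⅟D * C).map f) := by
  let _ : Invertible (D.map f) := Invertible.map (f : α →+* β).mapMatrix D
  rw [fromBlocks_map, toBlocks₁₁_inverse_fromBlocks, map_schur]

end Matrix

theorem map_ringInverse {M N F : Type*} [MonoidWithZero M] [MonoidWithZero N] [EquivLike F M N]
    [MulEquivClass F M N] (e : F) (a : M) : e (Ring.inverse a) = Ring.inverse (e a) := by
  by_cases h : IsUnit a
  · obtain ⟨u, rfl⟩ := h
    rw [Ring.inverse_unit]
    exact (Ring.inverse_unit (Units.map (e : M →* N) u)).symm
  · rw [Ring.inverse_non_unit _ h, Ring.inverse_non_unit _ (by rwa [MulEquiv.isUnit_map]), map_zero]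

/-- Given a linearization `L_p` of `p` and elements `x₁,…,xₙ` of a complex unital
algebra, `z − P` is invertible iff `Λ(z) − L_P` is, and in that case the
`(1,1)`-entry of `(Λ(z) − L_P)⁻¹` equals `(z − P)⁻¹`. -/
theorem linearization_resolvent {A : Type*} [Ring A] [Algebra ℂ A] (n m : ℕ)
    (x : Fin n → A) (p : FreeAlgebra ℂ (Fin n))
    (b₀ : Matrix (Unit ⊕ Fin m) (Unit ⊕ Fin m) ℂ)
    (b : Fin n → Matrix (Unit ⊕ Fin m) (Unit ⊕ Fin m) ℂ)
    (Q' : Matrix (Fin m) (Fin m) (FreeAlgebra ℂ (Fin n)))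
    (h11 : linMat n m b₀ b (Sum.inl ()) (Sum.inl ()) = 0)
    (hQ : (Matrix.of fun i j : Fin m =>
      linMat n m b₀ b (Sum.inr i) (Sum.inr j)) * Q' = 1)
    (hQ' : Q' * (Matrix.of fun i j : Fin m =>
      linMat n m b₀ b (Sum.inr i) (Sum.inr j)) = 1)
    (hp : p = -∑ i : Fin m, ∑ j : Fin m,
      linMat n m b₀ b (Sum.inl ()) (Sum.inr i) * Q' i j *
        linMat n m b₀ b (Sum.inr j) (Sum.inl ()))
    (z : ℂ) :
    (IsUnit (algebraMap ℂ A z - FreeAlgebra.lift ℂ x p) ↔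
      IsUnit ((Matrix.of fun i j : Unit ⊕ Fin m =>
          if i = Sum.inl () ∧ j = Sum.inl () then algebraMap ℂ A z else 0) -
        (linMat n m b₀ b).map (FreeAlgebra.lift ℂ x))) ∧
    (IsUnit (algebraMap ℂ A z - FreeAlgebra.lift ℂ x p) →
      Ring.inverse ((Matrix.of fun i j : Unit ⊕ Fin m =>
          if i = Sum.inl () ∧ j = Sum.inl () then algebraMap ℂ A z else 0) -
        (linMat n m b₀ b).map (FreeAlgebra.lift ℂ x)) (Sum.inl ()) (Sum.inl ()) =
      Ring.inverse (algebraMap ℂ A z - FreeAlgebra.lift ℂ x p)) := by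
  set f := FreeAlgebra.lift ℂ x
  set L := linMat n m b₀ b
  let _ : Invertible (-L.toBlocks₂₂) :=
    ⟨-Q', by rw [neg_mul_neg]; exact hQ', by rw [neg_mul_neg]; exact hQ⟩
  have hblocks : (of fun i j : Unit ⊕ Fin m =>
        if i = Sum.inl () ∧ j = Sum.inl () then algebraMap ℂ A z else 0) - L.map f =
      (fromBlocks (of fun _ _ => algebraMap ℂ _ z) (-L.toBlocks₁₂) (-L.toBlocks₂₁)
        (-L.toBlocks₂₂)).map f := by
    ext (_ | i) (_ | j) <;> simp [h11, toBlocks₁₂, toBlocks₂₁, toBlocks₂₂]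
  have hschur : (of (fun _ _ => algebraMap ℂ _ z) -
      -L.toBlocks₁₂ * ⅟(-L.toBlocks₂₂) * -L.toBlocks₂₁).map f =
        uniqueRingEquiv.symm (algebraMap ℂ A z - f p) := by
    rw [show ⅟(-L.toBlocks₂₂) = -Q' from rfl]
    ext ⟨⟩ ⟨⟩
    simp [hp, toBlocks₁₂_mul_mul_toBlocks₂₁_apply]
  rw [hblocks, isUnit_map_fromBlocks_iff, hschur, MulEquiv.isUnit_map]
  refine ⟨Iff.rfl, fun _ => ?_⟩
  change toBlocks₁₁ (Ring.inverse _) () () = _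
  rw [toBlocks₁₁_inverse_map_fromBlocks, hschur]
  exact (map_ringInverse uniqueRingEquiv _).trans (congrArg _ (uniqueRingEquiv.apply_symm_apply _))
end
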